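/- Let ψ be as in the context. There exist constants c₂, c₃ ∈ (0,∞) and L₀, R₀ > 1 (all independent of ν, L and R) such that for all L ≥ L₀, all R ≥ R₀ and every Borel measure ν on ℝ^d with ν(Λ_j) ≤ 1 for all j ∈ ℤ^d the following holds: setting Λ := ⋃_{j₁∈ℤ^{d₁}, |j₁| < L} Λ_{(j₁,0)}, Λ̃ := ⋃_{j=(j₁,j₂)∈ℤ^d, |j₁| ≤ L/8, R+1 < |j₂| ≤ 2R} Λ_j, and V_{ν,R}(x) := ∫_{{y : |y₂| > R}} f(x − y) ν(dy), one has ∫_Λ V_{ν,R}(x) ψ(x)² dx ≥ c₂ · R^{−α₂(1−γ₁)} · ν(Λ̃) − c₃ · |Λ| · L^{−α₁(1−γ)}. -/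

import Mathlib

/-!
Since `ψ²` is periodic and at least `s` on `Λ₀`, it suffices to bound `∫_Λ V_{ν,R}` from below.
Put `t = R^{α₂/α₁}`, so that `t^{α₁} = R^{α₂}`. If `2t ≤ L`, every `y ∈ Λ̃` sees inside `Λ` a row
of `≳ t^{d₁}` cubes at horizontal distance `≲ t`, on each of which the lower bound on `f` gives
`≳ R^{-α₂}`; hence `∫_Λ f(x - y) dx ≳ t^{d₁} R^{-α₂} = R^{-α₂(1-γ₁)}`, and Tonelli yields the
main term. If `L < 2t`, then `ν(Λ̃) ≲ L^{d₁} R^{d₂}`, `|Λ| ≥ L^{d₁}` and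
`R^{d₂-α₂(1-γ₁)} = t^{-α₁(1-γ)} ≲ L^{-α₁(1-γ)}`, so the subtracted term dominates and the
inequality is trivial.
-/

open MeasureTheory ENNReal

noncomputable section

/-- The half-open unit cube `Λ_j = j + [-1/2, 1/2)^d` centred at the lattice point `j`. -/
def cube (d : ℕ) (j : Fin d → ℤ) : Set (Fin d → ℝ) :=
  {x | ∀ i, (j i : ℝ) - 1/2 ≤ x i ∧ x i < (j i : ℝ) + 1/2}

/-- The unit cube in the product space `ℝ^{d₁} × ℝ^{d₂}` centred at the lattice point `j`. -/
def cubeP (d₁ d₂ : ℕ) (j : (Fin d₁ → ℤ) × (Fin d₂ → ℤ)) :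
    Set ((Fin d₁ → ℝ) × (Fin d₂ → ℝ)) :=
  (cube d₁ j.1) ×ˢ (cube d₂ j.2)

/-- The lattice point `j ∈ ℤ^{d₁} × ℤ^{d₂}` viewed as a vector of `ℝ^{d₁} × ℝ^{d₂}`. -/
def latVecP (d₁ d₂ : ℕ) (j : (Fin d₁ → ℤ) × (Fin d₂ → ℤ)) :
    (Fin d₁ → ℝ) × (Fin d₂ → ℝ) :=
  (fun i => (j.1 i : ℝ), fun i => (j.2 i : ℝ))

section Cubes

open Function

variable {d d₁ d₂ : ℕ}

lemma cube_eq_pi (j : Fin d → ℤ) :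
    cube d j = Set.univ.pi fun i => Set.Ico ((j i : ℝ) - 1/2) ((j i : ℝ) + 1/2) := by
  ext x
  simp [cube, Set.mem_pi]

lemma measurableSet_cube (j : Fin d → ℤ) : MeasurableSet (cube d j) := by
  rw [cube_eq_pi]
  exact MeasurableSet.univ_pi fun _ => measurableSet_Ico

lemma volume_cube (j : Fin d → ℤ) : volume (cube d j) = 1 := by
  norm_num [cube_eq_pi, volume_pi_pi, Real.volume_Ico]

lemma measurableSet_cubeP (j : (Fin d₁ → ℤ) × (Fin d₂ → ℤ)) : MeasurableSet (cubeP d₁ d₂ j) :=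
  (measurableSet_cube j.1).prod (measurableSet_cube j.2)

lemma volume_cubeP (j : (Fin d₁ → ℤ) × (Fin d₂ → ℤ)) : volume (cubeP d₁ d₂ j) = 1 := by
  rw [cubeP, Measure.volume_eq_prod, Measure.prod_prod, volume_cube, volume_cube, mul_one]

lemma eq_floor_of_mem_cube {j : Fin d → ℤ} {x : Fin d → ℝ} (hx : x ∈ cube d j) (i : Fin d) :
    j i = ⌊x i + 1/2⌋ := by
  obtain ⟨h₁, h₂⟩ := hx i
  rw [eq_comm, Int.floor_eq_iff]
  constructor <;> linarith

lemma mem_cube_floor (x : Fin d → ℝ) : x ∈ cube d fun i => ⌊x i + 1/2⌋ := fun i =>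
  ⟨by linarith [Int.floor_le (x i + 1/2)], by linarith [Int.lt_floor_add_one (x i + 1/2)]⟩

lemma pairwise_disjoint_cube : Pairwise (Disjoint on cube d) := by
  intro j j' hne
  refine Set.disjoint_left.2 fun x hx hx' => hne (funext fun i => ?_)
  rw [eq_floor_of_mem_cube hx i, eq_floor_of_mem_cube hx' i]

lemma pairwise_disjoint_cubeP : Pairwise (Disjoint on cubeP d₁ d₂) := by
  intro j j' hne
  exact Set.disjoint_prod.2 ((not_and_or.1 (hne ∘ Prod.ext_iff.2)).imp
    (fun h => pairwise_disjoint_cube h) (fun h => pairwise_disjoint_cube h))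

lemma exists_mem_cubeP (x : (Fin d₁ → ℝ) × (Fin d₂ → ℝ)) : ∃ j, x ∈ cubeP d₁ d₂ j :=
  ⟨(fun i => ⌊x.1 i + 1/2⌋, fun i => ⌊x.2 i + 1/2⌋), mem_cube_floor x.1, mem_cube_floor x.2⟩

lemma norm_intCast_pi (j : Fin d → ℤ) : ‖fun i => (j i : ℝ)‖ = ‖j‖ := by
  simp only [Pi.norm_def]
  norm_cast

lemma norm_sub_intCast_le_half {j : Fin d → ℤ} {x : Fin d → ℝ} (hx : x ∈ cube d j) :
    ‖x - fun i => (j i : ℝ)‖ ≤ 1/2 := by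
  refine (pi_norm_le_iff_of_nonneg (by norm_num)).2 fun i => ?_
  obtain ⟨h₁, h₂⟩ := hx i
  rw [Pi.sub_apply, Real.norm_eq_abs, abs_le]
  constructor <;> linarith

lemma mem_cubeP_iff_sub_mem (j : (Fin d₁ → ℤ) × (Fin d₂ → ℤ)) (x : (Fin d₁ → ℝ) × (Fin d₂ → ℝ)) :
    x ∈ cubeP d₁ d₂ j ↔ x - latVecP d₁ d₂ j ∈ cubeP d₁ d₂ 0 := by
  simp only [cubeP, cube, latVecP, Set.mem_prod, Set.mem_ofPred_eq, Prod.fst_sub, Prod.snd_sub,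
    Pi.sub_apply, Prod.fst_zero, Prod.snd_zero, Pi.zero_apply, Int.cast_zero]
  constructor <;> rintro ⟨h₁, h₂⟩ <;>
    exact ⟨fun i => ⟨by linarith [h₁ i], by linarith [h₁ i]⟩,
      fun i => ⟨by linarith [h₂ i], by linarith [h₂ i]⟩⟩

lemma setLIntegral_cubeP_comp_sub (j : (Fin d₁ → ℤ) × (Fin d₂ → ℤ))
    (g : (Fin d₁ → ℝ) × (Fin d₂ → ℝ) → ℝ≥0∞) :
    ∫⁻ x in cubeP d₁ d₂ j, g (x - latVecP d₁ d₂ j) = ∫⁻ z in cubeP d₁ d₂ 0, g z := by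
  have hpre : cubeP d₁ d₂ j = (· - latVecP d₁ d₂ j) ⁻¹' cubeP d₁ d₂ 0 :=
    Set.ext (mem_cubeP_iff_sub_mem j)
  have : (volume : Measure ((Fin d₁ → ℝ) × (Fin d₂ → ℝ))).IsAddRightInvariant := by
    rw [Measure.volume_eq_prod]; infer_instance
  rw [hpre]
  exact (measurePreserving_sub_right volume _).setLIntegral_comp_preimage_emb
    (measurableEmbedding_subRight _) g _

lemma sigmaFinite_of_measure_cubeP_lt_top (ν : Measure ((Fin d₁ → ℝ) × (Fin d₂ → ℝ)))
    (hν : ∀ j, ν (cubeP d₁ d₂ j) < ∞) : SigmaFinite ν :=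
  Measure.sigmaFinite_of_countable (Set.countable_range _) (Set.forall_mem_range.2 hν)
    (Set.eq_univ_of_forall fun x => by simpa using exists_mem_cubeP x)

lemma le_of_periodic_of_le_on_cubeP {g : (Fin d₁ → ℝ) × (Fin d₂ → ℝ) → ℝ}
    (hper : ∀ x j, g (x + latVecP d₁ d₂ j) = g x) {s : ℝ} (hs : ∀ x ∈ cubeP d₁ d₂ 0, s ≤ g x)
    (x : (Fin d₁ → ℝ) × (Fin d₂ → ℝ)) : s ≤ g x := by
  obtain ⟨j, hj⟩ := exists_mem_cubeP x
  simpa only [← hper (x - latVecP d₁ d₂ j) j, sub_add_cancel] using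
    hs _ ((mem_cubeP_iff_sub_mem j x).1 hj)

end Cubes

def latticeBox (d M : ℕ) : Finset (Fin d → ℤ) :=
  Finset.Icc (fun _ => -(M : ℤ)) fun _ => (M : ℤ)

section Counting

variable {d d₁ d₂ : ℕ}

lemma mem_latticeBox_floor {r : ℝ} (hr : 0 ≤ r) {k : Fin d → ℤ} :
    k ∈ latticeBox d ⌊r⌋₊ ↔ ‖k‖ ≤ r := by
  rw [latticeBox, Finset.mem_Icc, pi_norm_le_iff_of_nonneg hr]
  simp only [Pi.le_def, ← forall_and]
  refine forall_congr' fun i => ?_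
  rw [Int.norm_eq_abs, ← Int.cast_abs, ← Int.le_floor, ← Int.natCast_floor_eq_floor hr, abs_le]

lemma card_latticeBox (d M : ℕ) : (latticeBox d M).card = (2 * M + 1) ^ d := by
  simp only [latticeBox, Pi.card_Icc, Int.card_Icc, Finset.prod_const, Finset.card_univ,
    Fintype.card_fin]
  congr 1
  omega

lemma measure_biUnion_cubeP_le_card (ν : Measure ((Fin d₁ → ℝ) × (Fin d₂ → ℝ)))
    (hν : ∀ j, ν (cubeP d₁ d₂ j) ≤ 1) (J : Finset ((Fin d₁ → ℤ) × (Fin d₂ → ℤ))) :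
    ν (⋃ j ∈ J, cubeP d₁ d₂ j) ≤ J.card :=
  calc ν (⋃ j ∈ J, cubeP d₁ d₂ j) ≤ ∑ j ∈ J, ν (cubeP d₁ d₂ j) := measure_biUnion_finset_le _ _
    _ ≤ ∑ _j ∈ J, 1 := Finset.sum_le_sum fun j _ => hν j
    _ = J.card := by simp

lemma card_mul_le_setLIntegral_biUnion_cubeP {ι : Type*} (J : Finset ι)
    {p : ι → (Fin d₁ → ℤ) × (Fin d₂ → ℤ)} (hp : Function.Injective p)
    (g : (Fin d₁ → ℝ) × (Fin d₂ → ℝ) → ℝ≥0∞) {c : ℝ≥0∞}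
    (hc : ∀ i ∈ J, c ≤ ∫⁻ x in cubeP d₁ d₂ (p i), g x) :
    J.card * c ≤ ∫⁻ x in ⋃ i ∈ J, cubeP d₁ d₂ (p i), g x := by
  rw [lintegral_biUnion_finset ((pairwise_disjoint_cubeP.comp_of_injective hp).set_pairwise _)
    (fun i _ => measurableSet_cubeP _), ← nsmul_eq_mul, ← Finset.sum_const]
  exact Finset.sum_le_sum hc

lemma card_le_volume_biUnion_cubeP {ι : Type*} (J : Finset ι)
    {p : ι → (Fin d₁ → ℤ) × (Fin d₂ → ℤ)} (hp : Function.Injective p) :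
    (J.card : ℝ≥0∞) ≤ volume (⋃ i ∈ J, cubeP d₁ d₂ (p i)) := by
  simpa [volume_cubeP] using card_mul_le_setLIntegral_biUnion_cubeP J hp 1 (c := 1)

end Counting

/-- `slab d₁ d₂ L` is the paper's `Λ`, `shell d₁ d₂ L R` its `Λ̃`, and
`cutoffPotential f ν R` its `V_{ν,R}`. -/
def slab (d₁ d₂ : ℕ) (L : ℝ) : Set ((Fin d₁ → ℝ) × (Fin d₂ → ℝ)) :=
  ⋃ j₁ ∈ {j₁ : Fin d₁ → ℤ | ‖j₁‖ < L}, cubeP d₁ d₂ (j₁, 0)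

def shell (d₁ d₂ : ℕ) (L R : ℝ) : Set ((Fin d₁ → ℝ) × (Fin d₂ → ℝ)) :=
  ⋃ j ∈ {j : (Fin d₁ → ℤ) × (Fin d₂ → ℤ) | ‖j.1‖ ≤ L / 8 ∧ R + 1 < ‖j.2‖ ∧ ‖j.2‖ ≤ 2 * R},
    cubeP d₁ d₂ j

def cutoffPotential {d₁ d₂ : ℕ} (f : (Fin d₁ → ℝ) × (Fin d₂ → ℝ) → ℝ)
    (ν : Measure ((Fin d₁ → ℝ) × (Fin d₂ → ℝ))) (R : ℝ) (x : (Fin d₁ → ℝ) × (Fin d₂ → ℝ)) :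
    ℝ≥0∞ :=
  ∫⁻ y in {y : (Fin d₁ → ℝ) × (Fin d₂ → ℝ) | R < ‖y.2‖}, ENNReal.ofReal (f (x - y)) ∂ν

section Regions

variable {d d₁ d₂ : ℕ}

lemma measurableSet_shell (L R : ℝ) : MeasurableSet (shell d₁ d₂ L R) :=
  .biUnion (Set.to_countable _) fun j _ => measurableSet_cubeP j

lemma abs_norm_sub_norm_le_half {j : Fin d → ℤ} {x : Fin d → ℝ} (hx : x ∈ cube d j) :
    |‖x‖ - ‖j‖| ≤ 1/2 := by
  rw [← norm_intCast_pi]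
  exact (abs_norm_sub_norm_le _ _).trans (norm_sub_intCast_le_half hx)

lemma norm_snd_mem_of_mem_shell {L R : ℝ} {y : (Fin d₁ → ℝ) × (Fin d₂ → ℝ)}
    (hy : y ∈ shell d₁ d₂ L R) : R + 1/2 < ‖y.2‖ ∧ ‖y.2‖ ≤ 2 * R + 1/2 := by
  simp only [shell, Set.mem_iUnion, exists_prop] at hy
  obtain ⟨j, ⟨-, hj₂, hj₂'⟩, hyj⟩ := hy
  have := abs_le.1 (abs_norm_sub_norm_le_half hyj.2)
  constructor <;> linarith [this.1, this.2]

lemma shell_subset (L R : ℝ) : shell d₁ d₂ L R ⊆ {y | R < ‖y.2‖} := fun y hy =>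
  show R < ‖y.2‖ by linarith [(norm_snd_mem_of_mem_shell hy).1]

lemma measure_shell_le (ν : Measure ((Fin d₁ → ℝ) × (Fin d₂ → ℝ)))
    (hν : ∀ j, ν (cubeP d₁ d₂ j) ≤ 1) {L R : ℝ} (hL : 1 ≤ L) (hR : 1 ≤ R) :
    ν (shell d₁ d₂ L R) ≤ ENNReal.ofReal ((2 * L) ^ d₁ * (5 * R) ^ d₂) := by
  have hsub : shell d₁ d₂ L R ⊆
      ⋃ j ∈ latticeBox d₁ ⌊L / 8⌋₊ ×ˢ latticeBox d₂ ⌊2 * R⌋₊, cubeP d₁ d₂ j := by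
    refine Set.biUnion_subset_biUnion_left ?_
    rintro j ⟨hj₁, -, hj₂⟩
    rw [Finset.mem_coe, Finset.mem_product, mem_latticeBox_floor (by linarith),
      mem_latticeBox_floor (by linarith)]
    exact ⟨hj₁, hj₂⟩
  refine (measure_mono hsub).trans <| (measure_biUnion_cubeP_le_card ν hν _).trans ?_
  rw [← ENNReal.ofReal_natCast, Finset.card_product, card_latticeBox, card_latticeBox]
  refine ENNReal.ofReal_le_ofReal ?_
  push_cast
  have h₁ : (⌊L / 8⌋₊ : ℝ) ≤ L / 8 := Nat.floor_le (by linarith)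
  have h₂ : (⌊2 * R⌋₊ : ℝ) ≤ 2 * R := Nat.floor_le (by linarith)
  gcongr <;> linarith

lemma ofReal_pow_le_volume_slab {L : ℝ} (hL : 2 ≤ L) :
    ENNReal.ofReal (L ^ d₁) ≤ volume (slab d₁ d₂ L) := by
  have hsub : (⋃ k ∈ latticeBox d₁ ⌊L - 1/2⌋₊, cubeP d₁ d₂ (k, 0)) ⊆ slab d₁ d₂ L :=
    Set.biUnion_subset_biUnion_left fun k hk => by
      have := (mem_latticeBox_floor (by linarith)).1 hk
      show ‖k‖ < L
      linarith
  refine le_trans ?_ ((card_le_volume_biUnion_cubeP _ fun k k' h => congrArg Prod.fst h).trans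
    (measure_mono hsub))
  rw [← ENNReal.ofReal_natCast, card_latticeBox]
  refine ENNReal.ofReal_le_ofReal ?_
  push_cast
  have := Nat.lt_floor_add_one (L - 1/2)
  gcongr
  linarith

end Regions

def CubeIntegralLowerBound {d₁ d₂ : ℕ} (f : (Fin d₁ → ℝ) × (Fin d₂ → ℝ) → ℝ)
    (f_u α₁ α₂ r₀ : ℝ) : Prop :=
  ∀ x : (Fin d₁ → ℝ) × (Fin d₂ → ℝ), r₀ ≤ max ‖x.1‖ ‖x.2‖ →
    ENNReal.ofReal (f_u / (‖x.1‖ ^ α₁ + ‖x.2‖ ^ α₂)) ≤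
      ∫⁻ y in cubeP d₁ d₂ 0, ENNReal.ofReal (f (y - x))

lemma rpow_add_rpow_le {α₁ α₂ R a b : ℝ} (hα₁ : 0 < α₁) (hα₂ : 0 ≤ α₂) (hR : 0 ≤ R)
    (ha : 0 ≤ a) (ha' : a ≤ 2 * R ^ (α₂ / α₁)) (hb : 0 ≤ b) (hb' : b ≤ 3 * R) :
    a ^ α₁ + b ^ α₂ ≤ (2 ^ α₁ + 3 ^ α₂) * R ^ α₂ := by
  have h₁ : a ^ α₁ ≤ 2 ^ α₁ * R ^ α₂ :=
    calc a ^ α₁ ≤ (2 * R ^ (α₂ / α₁)) ^ α₁ := Real.rpow_le_rpow ha ha' hα₁.le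
      _ = 2 ^ α₁ * R ^ α₂ := by
        rw [Real.mul_rpow zero_le_two (by positivity), ← Real.rpow_mul hR,
          div_mul_cancel₀ _ hα₁.ne']
  have h₂ : b ^ α₂ ≤ 3 ^ α₂ * R ^ α₂ :=
    calc b ^ α₂ ≤ (3 * R) ^ α₂ := Real.rpow_le_rpow hb hb' hα₂
      _ = 3 ^ α₂ * R ^ α₂ := Real.mul_rpow zero_le_three hR
  linarith

lemma rpow_neg_mul_one_sub_div_le {R α₁ : ℝ} (hR : 0 < R) (hα₁ : α₁ ≠ 0) (α₂ : ℝ) (n : ℕ) :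
    R ^ (-(α₂ * (1 - n / α₁))) ≤ (2 * ⌊R ^ (α₂ / α₁)⌋₊ + 1) ^ n / R ^ α₂ := by
  have ht : R ^ (α₂ / α₁) ≤ 2 * ⌊R ^ (α₂ / α₁)⌋₊ + 1 := by
    have := Nat.lt_floor_add_one (R ^ (α₂ / α₁))
    have : (0 : ℝ) ≤ ⌊R ^ (α₂ / α₁)⌋₊ := Nat.cast_nonneg _
    linarith
  calc R ^ (-(α₂ * (1 - n / α₁))) = (R ^ (α₂ / α₁)) ^ n / R ^ α₂ := by
        rw [← Real.rpow_natCast, ← Real.rpow_mul hR.le, ← Real.rpow_sub hR]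
        congr 1
        field_simp
        ring
    _ ≤ _ := by gcongr

namespace CubeIntegralLowerBound

variable {d₁ d₂ : ℕ} {f : (Fin d₁ → ℝ) × (Fin d₂ → ℝ) → ℝ} {f_u α₁ α₂ r₀ : ℝ}

lemma le_setLIntegral_cubeP (h : CubeIntegralLowerBound f f_u α₁ α₂ r₀)
    (j : (Fin d₁ → ℤ) × (Fin d₂ → ℤ)) {y : (Fin d₁ → ℝ) × (Fin d₂ → ℝ)}
    (hy : r₀ ≤ max ‖(y - latVecP d₁ d₂ j).1‖ ‖(y - latVecP d₁ d₂ j).2‖) :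
    ENNReal.ofReal (f_u / (‖(y - latVecP d₁ d₂ j).1‖ ^ α₁ + ‖(y - latVecP d₁ d₂ j).2‖ ^ α₂)) ≤
      ∫⁻ x in cubeP d₁ d₂ j, ENNReal.ofReal (f (x - y)) := by
  refine (h _ hy).trans_eq ?_
  rw [← setLIntegral_cubeP_comp_sub j]
  simp only [sub_sub_sub_cancel_right]

lemma le_setLIntegral_cubeP_add (h : CubeIntegralLowerBound f f_u α₁ α₂ r₀)
    (hfu : 0 ≤ f_u) (hα₁ : 0 < α₁) (hα₂ : 0 ≤ α₂) {R : ℝ} (hR : 1 ≤ R) (hr₀ : r₀ ≤ R)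
    {j₁ k : Fin d₁ → ℤ} (hk : ‖k‖ ≤ R ^ (α₂ / α₁)) {y : (Fin d₁ → ℝ) × (Fin d₂ → ℝ)}
    (hy₁ : y.1 ∈ cube d₁ j₁) (hy₂ : R ≤ ‖y.2‖) (hy₂' : ‖y.2‖ ≤ 3 * R) :
    ENNReal.ofReal (f_u / (2 ^ α₁ + 3 ^ α₂) / R ^ α₂) ≤
      ∫⁻ x in cubeP d₁ d₂ (j₁ + k, 0), ENNReal.ofReal (f (x - y)) := by
  have hdisp : y - latVecP d₁ d₂ (j₁ + k, 0) =
      ((y.1 - fun i => (j₁ i : ℝ)) - fun i => (k i : ℝ), y.2) := by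
    ext i <;> simp [latVecP, sub_sub]
  have hdisp₁ : ‖(y.1 - fun i => (j₁ i : ℝ)) - fun i => (k i : ℝ)‖ ≤ 2 * R ^ (α₂ / α₁) := by
    have := Real.one_le_rpow hR (div_nonneg hα₂ hα₁.le)
    linarith [norm_sub_le (y.1 - fun i => (j₁ i : ℝ)) fun i => (k i : ℝ), norm_intCast_pi k,
      norm_sub_intCast_le_half hy₁]
  refine le_trans (ENNReal.ofReal_le_ofReal ?_)
    (h.le_setLIntegral_cubeP _ (by rw [hdisp]; exact le_max_of_le_right (hr₀.trans hy₂)))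
  rw [hdisp, div_div]
  have : 0 < ‖y.2‖ ^ α₂ := Real.rpow_pos_of_pos (by linarith) _
  exact div_le_div_of_nonneg_left hfu (by positivity)
    (rpow_add_rpow_le hα₁ hα₂ (by linarith) (norm_nonneg _) hdisp₁ (norm_nonneg _) hy₂')

lemma le_setLIntegral_slab (h : CubeIntegralLowerBound f f_u α₁ α₂ r₀) (hfu : 0 ≤ f_u)
    (hα₁ : 0 < α₁) (hα₂ : 0 ≤ α₂) {L R : ℝ} (hR : 1 ≤ R) (hr₀ : r₀ ≤ R)
    (hRL : 2 * R ^ (α₂ / α₁) ≤ L) {y : (Fin d₁ → ℝ) × (Fin d₂ → ℝ)} (hy : y ∈ shell d₁ d₂ L R) :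
    ENNReal.ofReal (f_u / (2 ^ α₁ + 3 ^ α₂) * R ^ (-(α₂ * (1 - d₁ / α₁)))) ≤
      ∫⁻ x in slab d₁ d₂ L, ENNReal.ofReal (f (x - y)) := by
  have hy₂ := norm_snd_mem_of_mem_shell hy
  simp only [shell, Set.mem_iUnion, exists_prop] at hy
  obtain ⟨j, ⟨hj₁, -, -⟩, hyj⟩ := hy
  set K := latticeBox d₁ ⌊R ^ (α₂ / α₁)⌋₊
  have hK : ∀ k ∈ K, ‖k‖ ≤ R ^ (α₂ / α₁) := fun k hk =>
    (mem_latticeBox_floor (by positivity)).1 hk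
  have hp : Function.Injective fun k => ((j.1 + k, 0) : (Fin d₁ → ℤ) × (Fin d₂ → ℤ)) :=
    fun k k' hkk' => add_left_cancel (congrArg Prod.fst hkk')
  have hsub : ⋃ k ∈ K, cubeP d₁ d₂ (j.1 + k, 0) ⊆ slab d₁ d₂ L :=
    Set.iUnion₂_subset fun k hk => Set.subset_biUnion_of_mem (u := fun j₁ => cubeP d₁ d₂ (j₁, 0))
      (show ‖j.1 + k‖ < L by
        linarith [norm_add_le j.1 k, hK k hk, Real.rpow_pos_of_pos (by linarith : 0 < R) (α₂ / α₁)])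
  calc ENNReal.ofReal (f_u / (2 ^ α₁ + 3 ^ α₂) * R ^ (-(α₂ * (1 - d₁ / α₁))))
      ≤ ENNReal.ofReal (K.card * (f_u / (2 ^ α₁ + 3 ^ α₂) / R ^ α₂)) := by
        refine ENNReal.ofReal_le_ofReal ?_
        rw [card_latticeBox, mul_div_assoc', mul_comm _ (f_u / _), mul_div_assoc]
        push_cast
        gcongr
        exact rpow_neg_mul_one_sub_div_le (by linarith) hα₁.ne' α₂ d₁
    _ = K.card * ENNReal.ofReal (f_u / (2 ^ α₁ + 3 ^ α₂) / R ^ α₂) := by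
        rw [ENNReal.ofReal_mul (Nat.cast_nonneg _), ENNReal.ofReal_natCast]
    _ ≤ ∫⁻ x in ⋃ k ∈ K, cubeP d₁ d₂ (j.1 + k, 0), ENNReal.ofReal (f (x - y)) :=
        card_mul_le_setLIntegral_biUnion_cubeP K hp _ fun k hk =>
          h.le_setLIntegral_cubeP_add hfu hα₁ hα₂ hR hr₀ (hK k hk) hyj.1 (by linarith)
            (by linarith)
    _ ≤ ∫⁻ x in slab d₁ d₂ L, ENNReal.ofReal (f (x - y)) := lintegral_mono_set hsub

end CubeIntegralLowerBound

lemma mul_measure_le_setLIntegral_setLIntegral {α β : Type*} [MeasurableSpace α]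
    [MeasurableSpace β] {μ : Measure α} {ν : Measure β} [SFinite μ] [SFinite ν]
    {F : α → β → ℝ≥0∞} (hF : Measurable (Function.uncurry F)) (A : Set α) {S : Set β}
    (hS : MeasurableSet S) {c : ℝ≥0∞} (hc : ∀ y ∈ S, c ≤ ∫⁻ x in A, F x y ∂μ) :
    c * ν S ≤ ∫⁻ x in A, ∫⁻ y in S, F x y ∂ν ∂μ :=
  calc c * ν S = ∫⁻ _ in S, c ∂ν := (setLIntegral_const S c).symm
    _ ≤ ∫⁻ y in S, ∫⁻ x in A, F x y ∂μ ∂ν := setLIntegral_mono' hS hc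
    _ = ∫⁻ x in A, ∫⁻ y in S, F x y ∂ν ∂μ := (lintegral_lintegral_swap hF.aemeasurable).symm

lemma rpow_neg_mul_pow_le_of_lt {d₁ d₂ : ℕ} {α₁ α₂ R L : ℝ} (hα₁ : 0 < α₁) (hα₂ : α₂ ≠ 0)
    (hγ : (d₁ : ℝ) / α₁ + d₂ / α₂ ≤ 1) (hR : 0 < R) (hL : 0 < L) (hLR : L < 2 * R ^ (α₂ / α₁)) :
    R ^ (-(α₂ * (1 - d₁ / α₁))) * R ^ d₂ ≤
      2 ^ (α₁ * (1 - (d₁ / α₁ + d₂ / α₂))) * L ^ (-(α₁ * (1 - (d₁ / α₁ + d₂ / α₂)))) := by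
  set b := α₁ * (1 - (d₁ / α₁ + d₂ / α₂))
  have hb : 0 ≤ b := mul_nonneg hα₁.le (by linarith)
  calc R ^ (-(α₂ * (1 - d₁ / α₁))) * R ^ d₂ = (R ^ (α₂ / α₁)) ^ (-b) := by
        rw [← Real.rpow_natCast, ← Real.rpow_add hR, ← Real.rpow_mul hR.le]
        congr 1
        simp only [b]
        field_simp
        ring
    _ ≤ (L / 2) ^ (-b) := Real.rpow_le_rpow_of_nonpos (by positivity) (by linarith) (by linarith)
    _ = 2 ^ b * L ^ (-b) := by
        rw [Real.div_rpow hL.le zero_le_two, Real.rpow_neg zero_le_two, div_inv_eq_mul, mul_comm]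

section Estimates

variable {d₁ d₂ : ℕ} {f : (Fin d₁ → ℝ) × (Fin d₂ → ℝ) → ℝ} {f_u α₁ α₂ r₀ : ℝ}

lemma ofReal_mul_measure_shell_le_lintegral_slab (h : CubeIntegralLowerBound f f_u α₁ α₂ r₀)
    (hf : Measurable f) (hfu : 0 ≤ f_u) (hα₁ : 0 < α₁) (hα₂ : 0 ≤ α₂)
    {ψ : (Fin d₁ → ℝ) × (Fin d₂ → ℝ) → ℝ} {s : ℝ} (hs : 0 ≤ s) (hψ : ∀ x, s ≤ ψ x ^ 2)
    (ν : Measure ((Fin d₁ → ℝ) × (Fin d₂ → ℝ))) [SFinite ν] {L R : ℝ} (hR : 1 ≤ R)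
    (hr₀ : r₀ ≤ R) (hRL : 2 * R ^ (α₂ / α₁) ≤ L) :
    ENNReal.ofReal (s * (f_u / (2 ^ α₁ + 3 ^ α₂)) * R ^ (-(α₂ * (1 - d₁ / α₁)))) *
        ν (shell d₁ d₂ L R) ≤
      ∫⁻ x in slab d₁ d₂ L, cutoffPotential f ν R x * ENNReal.ofReal (ψ x ^ 2) := by
  have hF : Measurable (Function.uncurry fun x y => ENNReal.ofReal (f (x - y))) :=
    ENNReal.measurable_ofReal.comp (hf.comp (measurable_fst.sub measurable_snd))
  have hshell := mul_measure_le_setLIntegral_setLIntegral (μ := volume) (ν := ν) hF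
    (slab d₁ d₂ L) (measurableSet_shell L R)
    fun y hy => h.le_setLIntegral_slab hfu hα₁ hα₂ hR hr₀ hRL hy
  calc ENNReal.ofReal (s * (f_u / (2 ^ α₁ + 3 ^ α₂)) * R ^ (-(α₂ * (1 - d₁ / α₁)))) *
        ν (shell d₁ d₂ L R)
      = ENNReal.ofReal s * (ENNReal.ofReal (f_u / (2 ^ α₁ + 3 ^ α₂) *
          R ^ (-(α₂ * (1 - d₁ / α₁)))) * ν (shell d₁ d₂ L R)) := by
        rw [mul_assoc s, ENNReal.ofReal_mul hs, mul_assoc]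
    _ ≤ ENNReal.ofReal s * ∫⁻ x in slab d₁ d₂ L, cutoffPotential f ν R x := by
        gcongr
        exact hshell.trans (lintegral_mono fun x => lintegral_mono_set (shell_subset L R))
    _ = ∫⁻ x in slab d₁ d₂ L, cutoffPotential f ν R x * ENNReal.ofReal s := by
        rw [← lintegral_const_mul' _ _ ENNReal.ofReal_ne_top]
        simp only [mul_comm]
    _ ≤ ∫⁻ x in slab d₁ d₂ L, cutoffPotential f ν R x * ENNReal.ofReal (ψ x ^ 2) :=
        lintegral_mono fun x => by gcongr; exact hψ x

lemma ofReal_mul_measure_shell_le_volume_slab (ν : Measure ((Fin d₁ → ℝ) × (Fin d₂ → ℝ)))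
    (hν : ∀ j, ν (cubeP d₁ d₂ j) ≤ 1) {c : ℝ} (hc : 0 ≤ c) (hα₁ : 0 < α₁) (hα₂ : α₂ ≠ 0)
    (hγ : (d₁ : ℝ) / α₁ + d₂ / α₂ ≤ 1) {L R : ℝ} (hL : 2 ≤ L) (hR : 1 ≤ R)
    (hLR : L < 2 * R ^ (α₂ / α₁)) :
    ENNReal.ofReal (c * R ^ (-(α₂ * (1 - d₁ / α₁)))) * ν (shell d₁ d₂ L R) ≤
      ENNReal.ofReal (c * 2 ^ d₁ * 5 ^ d₂ * 2 ^ (α₁ * (1 - (d₁ / α₁ + d₂ / α₂)))) *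
        volume (slab d₁ d₂ L) * ENNReal.ofReal (L ^ (-(α₁ * (1 - (d₁ / α₁ + d₂ / α₂))))) := by
  set b := α₁ * (1 - (d₁ / α₁ + d₂ / α₂))
  have hpow := rpow_neg_mul_pow_le_of_lt hα₁ hα₂ hγ (by linarith) (by linarith) hLR
  calc ENNReal.ofReal (c * R ^ (-(α₂ * (1 - d₁ / α₁)))) * ν (shell d₁ d₂ L R)
      ≤ ENNReal.ofReal (c * R ^ (-(α₂ * (1 - d₁ / α₁)))) *
          ENNReal.ofReal ((2 * L) ^ d₁ * (5 * R) ^ d₂) := by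
        gcongr
        exact measure_shell_le ν hν (by linarith) hR
    _ ≤ ENNReal.ofReal (c * 2 ^ d₁ * 5 ^ d₂ * 2 ^ b) * ENNReal.ofReal (L ^ d₁) *
          ENNReal.ofReal (L ^ (-b)) := by
        rw [← ENNReal.ofReal_mul (by positivity), ← ENNReal.ofReal_mul (by positivity),
          ← ENNReal.ofReal_mul (by positivity)]
        refine ENNReal.ofReal_le_ofReal ?_
        calc c * R ^ (-(α₂ * (1 - d₁ / α₁))) * ((2 * L) ^ d₁ * (5 * R) ^ d₂)
            = c * 2 ^ d₁ * 5 ^ d₂ * L ^ d₁ * (R ^ (-(α₂ * (1 - d₁ / α₁))) * R ^ d₂) := by ring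
          _ ≤ c * 2 ^ d₁ * 5 ^ d₂ * L ^ d₁ * (2 ^ b * L ^ (-b)) := by gcongr
          _ = c * 2 ^ d₁ * 5 ^ d₂ * 2 ^ b * L ^ d₁ * L ^ (-b) := by ring
    _ ≤ _ := by
        gcongr
        exact ofReal_pow_le_volume_slab hL

end Estimates

theorem statement9_general (d₁ d₂ : ℕ)
    (f : (Fin d₁ → ℝ) × (Fin d₂ → ℝ) → ℝ)
    (hf_meas : Measurable f)
    (α₁ α₂ : ℝ) (hα₁ : 0 < α₁) (hα₂ : 0 < α₂)
    (hγ : (d₁ : ℝ) / α₁ + (d₂ : ℝ) / α₂ < 1)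
    (f_u r₀ : ℝ) (hfu : 0 < f_u)
    (h_low : ∀ x : (Fin d₁ → ℝ) × (Fin d₂ → ℝ), r₀ ≤ max ‖x.1‖ ‖x.2‖ →
      ENNReal.ofReal (f_u / (‖x.1‖ ^ α₁ + ‖x.2‖ ^ α₂)) ≤
        ∫⁻ y in cubeP d₁ d₂ 0, ENNReal.ofReal (f (y - x)))
    (ψ : (Fin d₁ → ℝ) × (Fin d₂ → ℝ) → ℝ)
    (hψ_per : ∀ x j, ψ (x + latVecP d₁ d₂ j) = ψ x)
    (s : ℝ) (hs : 0 < s) (hψ_inf : ∀ x ∈ cubeP d₁ d₂ 0, s ≤ ψ x ^ 2) :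
    ∃ c₂ c₃ L₀ R₀ : ℝ, 0 < c₂ ∧ 0 < c₃ ∧ 1 < L₀ ∧ 1 < R₀ ∧
      ∀ L R : ℝ, L₀ ≤ L → R₀ ≤ R →
      ∀ ν : Measure ((Fin d₁ → ℝ) × (Fin d₂ → ℝ)),
        (∀ j, ν (cubeP d₁ d₂ j) ≤ 1) →
        ENNReal.ofReal (c₂ * R ^ (-(α₂ * (1 - (d₁ : ℝ) / α₁)))) *
            ν (⋃ j ∈ {j : (Fin d₁ → ℤ) × (Fin d₂ → ℤ) |
                ‖j.1‖ ≤ L / 8 ∧ R + 1 < ‖j.2‖ ∧ ‖j.2‖ ≤ 2 * R}, cubeP d₁ d₂ j) -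
          ENNReal.ofReal c₃ *
            volume (⋃ j₁ ∈ {j₁ : Fin d₁ → ℤ | ‖j₁‖ < L}, cubeP d₁ d₂ (j₁, 0)) *
            ENNReal.ofReal
              (L ^ (-(α₁ * (1 - ((d₁ : ℝ) / α₁ + (d₂ : ℝ) / α₂))))) ≤
        ∫⁻ x in ⋃ j₁ ∈ {j₁ : Fin d₁ → ℤ | ‖j₁‖ < L}, cubeP d₁ d₂ (j₁, 0),
          (∫⁻ y in {y : (Fin d₁ → ℝ) × (Fin d₂ → ℝ) | R < ‖y.2‖},
              ENNReal.ofReal (f (x - y)) ∂ν) * ENNReal.ofReal (ψ x ^ 2) := by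
  set c₂ := s * (f_u / (2 ^ α₁ + 3 ^ α₂))
  refine ⟨c₂, c₂ * 2 ^ d₁ * 5 ^ d₂ * 2 ^ (α₁ * (1 - (d₁ / α₁ + d₂ / α₂))), 2, max 2 r₀,
    by positivity, by positivity, one_lt_two, one_lt_two.trans_le (le_max_left _ _), ?_⟩
  intro L R hL hR ν hν
  have hR₁ : 1 ≤ R := by linarith [le_max_left 2 r₀]
  have hψ : ∀ x, s ≤ ψ x ^ 2 :=
    le_of_periodic_of_le_on_cubeP (fun x j => by rw [hψ_per]) hψ_inf
  have : SigmaFinite ν := sigmaFinite_of_measure_cubeP_lt_top ν fun j => (hν j).trans_lt one_lt_top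
  by_cases hRL : 2 * R ^ (α₂ / α₁) ≤ L
  · exact tsub_le_self.trans <| ofReal_mul_measure_shell_le_lintegral_slab h_low hf_meas hfu.le
      hα₁ hα₂.le hs.le hψ ν hR₁ (le_of_max_le_right hR) hRL
  · refine (tsub_eq_zero_of_le ?_).trans_le zero_le
    exact ofReal_mul_measure_shell_le_volume_slab ν hν (by positivity) hα₁ hα₂.ne' hγ.le hL hR₁
      (not_le.1 hRL)

/-- with `Λ` the row of cubes `Λ_{(j₁,0)}`, `|j₁| < L`, and `Λ̃` the
union of cubes `Λ_j`, `|j₁| ≤ L/8`, `R+1 < |j₂| ≤ 2R`, and `V_{ν,R}(x)` the potential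
cut off at distance `R` in the second direction, one has
`∫_Λ V_{ν,R} ψ² ≥ c₂ R^{-α₂(1-γ₁)} ν(Λ̃) - c₃ |Λ| L^{-α₁(1-γ)}`. -/
theorem statement9 (d₁ d₂ : ℕ) (hd₁ : 0 < d₁) (hd₂ : 0 < d₂)
    (f : (Fin d₁ → ℝ) × (Fin d₂ → ℝ) → ℝ)
    (hf_meas : Measurable f) (hf_nonneg : ∀ x, 0 ≤ f x)
    (α₁ α₂ : ℝ) (hα₁ : 0 < α₁) (hα₂ : 0 < α₂)
    (hγ : (d₁ : ℝ) / α₁ + (d₂ : ℝ) / α₂ < 1)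
    (f_u f₀ r₀ : ℝ) (hfu : 0 < f_u) (hf₀ : 0 < f₀) (hr₀ : 0 < r₀)
    (h_low : ∀ x : (Fin d₁ → ℝ) × (Fin d₂ → ℝ), r₀ ≤ max ‖x.1‖ ‖x.2‖ →
      ENNReal.ofReal (f_u / (‖x.1‖ ^ α₁ + ‖x.2‖ ^ α₂)) ≤
        ∫⁻ y in cubeP d₁ d₂ 0, ENNReal.ofReal (f (y - x)))
    (h_upp : ∀ x : (Fin d₁ → ℝ) × (Fin d₂ → ℝ), r₀ ≤ max ‖x.1‖ ‖x.2‖ →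
      f x ≤ f₀ / (‖x.1‖ ^ α₁ + ‖x.2‖ ^ α₂))
    (ψ : (Fin d₁ → ℝ) × (Fin d₂ → ℝ) → ℝ) (hψ_meas : Measurable ψ)
    (hψ_pos : ∀ x, 0 < ψ x)
    (hψ_per : ∀ x j, ψ (x + latVecP d₁ d₂ j) = ψ x)
    (s : ℝ) (hs : 0 < s) (hψ_inf : ∀ x ∈ cubeP d₁ d₂ 0, s ≤ ψ x ^ 2) :
    ∃ c₂ c₃ L₀ R₀ : ℝ, 0 < c₂ ∧ 0 < c₃ ∧ 1 < L₀ ∧ 1 < R₀ ∧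
      ∀ L R : ℝ, L₀ ≤ L → R₀ ≤ R →
      ∀ ν : Measure ((Fin d₁ → ℝ) × (Fin d₂ → ℝ)),
        (∀ j, ν (cubeP d₁ d₂ j) ≤ 1) →
        ENNReal.ofReal (c₂ * R ^ (-(α₂ * (1 - (d₁ : ℝ) / α₁)))) *
            ν (⋃ j ∈ {j : (Fin d₁ → ℤ) × (Fin d₂ → ℤ) |
                ‖j.1‖ ≤ L / 8 ∧ R + 1 < ‖j.2‖ ∧ ‖j.2‖ ≤ 2 * R}, cubeP d₁ d₂ j) -
          ENNReal.ofReal c₃ *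
            volume (⋃ j₁ ∈ {j₁ : Fin d₁ → ℤ | ‖j₁‖ < L}, cubeP d₁ d₂ (j₁, 0)) *
            ENNReal.ofReal
              (L ^ (-(α₁ * (1 - ((d₁ : ℝ) / α₁ + (d₂ : ℝ) / α₂))))) ≤
        ∫⁻ x in ⋃ j₁ ∈ {j₁ : Fin d₁ → ℤ | ‖j₁‖ < L}, cubeP d₁ d₂ (j₁, 0),
          (∫⁻ y in {y : (Fin d₁ → ℝ) × (Fin d₂ → ℝ) | R < ‖y.2‖},
              ENNReal.ofReal (f (x - y)) ∂ν) * ENNReal.ofReal (ψ x ^ 2) :=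
  statement9_general d₁ d₂ f hf_meas α₁ α₂ hα₁ hα₂ hγ f_u r₀ hfu h_low ψ hψ_per s hs hψ_inf
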